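/- Fix integers $n \ge 3$ and $m = n - 1$. Let $G$ be a symmetric positive definite $m \times m$ real matrix, let $k \in \mathbb{R}^m$ and set $v = G k$, let $\kappa, \tau$ be real numbers with $\kappa\,\tau < 0$, let $N$ be a real number, and let $s_1, \dots, s_m$ be real numbers. For each $a \in \{1,\dots,m\}$ define the $n \times n$ matrix $B^{(a)} = -s_a I_n + E^{(a)}$, where $E^{(a)}$ has: row $a$ equal to $-2(N/\tau)\,v^T$ in the first $m$ columns and $\kappa N/\tau$ in column $n$; row $n$ equal to $-N$ times the $a$-th row of $G$ in the first $m$ columns and $0$ in column $n$; and all other rows zero. Then there exists a symmetric positive definite $n \times n$ real matrix $H$ such that for every $a \in \{1,\dots,m\}$ the product $H\,B^{(a)}$ is symmetric; i.e., the matrices $B^{(a)}$ admit a common symmetrizer. -/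

import Mathlib

/-!
With `α = -τ/κ > 0` and `h = (-(2/κ) v, 1)`, take `H = α (G ⊕ 0) + h hᵀ`. It is positive
definite: `xᵀ H x = α yᵀ G y + (h ⬝ x)²` for `x = (y, t)`, and `h ⬝ x = t` when `y = 0`.
Each coefficient matrix is `B^(a) = -s_a I + u_a hᵀ + e qₐᵀ` with `u_a = (κN/τ) e_a`,
`e` the last basis vector and `q_a = (-N G_a, 0)`. Since `H e = h` and, by `α κN/τ = -N`,
`H u_a = q_a + t h`, the product `H (u_a hᵀ + e q_aᵀ) = q_a hᵀ + h q_aᵀ + t h hᵀ` is symmetric.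
-/

open Matrix

section Symmetrizer

variable {m : Type*} [Fintype m]

def symmetrizer (G : Matrix m m ℝ) (α : ℝ) (h : m ⊕ Unit → ℝ) :
    Matrix (m ⊕ Unit) (m ⊕ Unit) ℝ :=
  α • fromBlocks G 0 0 0 + vecMulVec h h

lemma symmetrizer_mulVec (G : Matrix m m ℝ) (α : ℝ) (h : m ⊕ Unit → ℝ) (y : m → ℝ)
    (z : Unit → ℝ) :
    symmetrizer G α h *ᵥ Sum.elim y z = Sum.elim (α • G *ᵥ y) 0 + (h ⬝ᵥ Sum.elim y z) • h := by
  rw [symmetrizer, add_mulVec, smul_mulVec, vecMulVec_mulVec, fromBlocks_mulVec]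
  ext (i | i) <;> simp

lemma symmetrizer_mulVec_single [DecidableEq m] {G : Matrix m m ℝ} (hG : G.IsSymm) (α : ℝ)
    (h : m ⊕ Unit → ℝ) (a : m) (γ : ℝ) :
    symmetrizer G α h *ᵥ Sum.elim (γ • Pi.single a 1) 0
      = Sum.elim ((α * γ) • G a) 0 + (h ⬝ᵥ Sum.elim (γ • Pi.single a 1) 0) • h := by
  rw [symmetrizer_mulVec, mulVec_smul, mulVec_single_one, ← row_transpose, hG.eq, smul_smul]
  rfl

lemma symmetrizer_mulVec_inr (G : Matrix m m ℝ) (α : ℝ) {h : m ⊕ Unit → ℝ}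
    (hh : h (Sum.inr ()) = 1) :
    symmetrizer G α h *ᵥ Sum.elim 0 1 = h := by
  simp [symmetrizer_mulVec, dotProduct, hh]

lemma dotProduct_symmetrizer_mulVec (G : Matrix m m ℝ) (α : ℝ) (h x : m ⊕ Unit → ℝ) :
    x ⬝ᵥ (symmetrizer G α h *ᵥ x) = α * (x ∘ Sum.inl ⬝ᵥ G *ᵥ (x ∘ Sum.inl)) + (h ⬝ᵥ x) ^ 2 := by
  have hx : x = Sum.elim (x ∘ Sum.inl) (x ∘ Sum.inr) := (Sum.elim_comp_inl_inr x).symm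
  rw [hx, symmetrizer_mulVec, dotProduct_add, dotProduct_smul, sumElim_dotProduct_sumElim, ← hx]
  simp [sq, dotProduct_comm h x]

lemma posDef_symmetrizer {G : Matrix m m ℝ} (hG : G.PosDef) {α : ℝ} (hα : 0 < α)
    {h : m ⊕ Unit → ℝ} (hh : h (Sum.inr ()) ≠ 0) :
    (symmetrizer G α h).PosDef := by
  have hGs : G.IsSymm := isHermitian_iff_isSymm.mp hG.isHermitian
  refine .of_dotProduct_mulVec_pos ?_ fun x hx => ?_
  · refine isHermitian_iff_isSymm.mpr (((hGs.fromBlocks (by simp) (by simp)).smul α).add ?_)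
    exact transpose_vecMulVec h h
  rw [star_trivial, dotProduct_symmetrizer_mulVec]
  by_cases hx₁ : x ∘ Sum.inl = 0
  · have hx₂ : x (Sum.inr ()) ≠ 0 := fun hx₂ => hx <| funext fun
      | .inl i => congrFun hx₁ i
      | .inr () => hx₂
    have hhx : h ⬝ᵥ x = h (Sum.inr ()) * x (Sum.inr ()) := by
      simp [dotProduct, Fintype.sum_sum_type, show ∀ i, x (Sum.inl i) = 0 from congrFun hx₁]
    rw [hx₁, hhx, mulVec_zero, dotProduct_zero, mul_zero, zero_add]
    positivity
  · have hGx := hG.dotProduct_mulVec_pos hx₁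
    rw [star_trivial] at hGx
    positivity

end Symmetrizer

section CommonSymmetrizer

variable {R n : Type*} [CommSemiring R] [Fintype n]

lemma isSymm_mul_vecMulVec_add_vecMulVec {H : Matrix n n R} {u e p q : n → R} {t : R}
    (hu : H *ᵥ u = q + t • p) (he : H *ᵥ e = p) :
    (H * (vecMulVec u p + vecMulVec e q)).IsSymm := by
  rw [Matrix.mul_add, mul_vecMulVec, mul_vecMulVec, hu, he, add_vecMulVec, smul_vecMulVec]
  simp only [IsSymm, transpose_add, transpose_smul, transpose_vecMulVec]
  abel

lemma Matrix.IsSymm.mul_smul_one_add [DecidableEq n] {H E : Matrix n n R} (hH : H.IsSymm)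
    (hHE : (H * E).IsSymm) (r : R) :
    (H * (r • 1 + E)).IsSymm := by
  rw [Matrix.mul_add, Matrix.mul_smul, Matrix.mul_one]
  exact (hH.smul r).add hHE

end CommonSymmetrizer

theorem reduced_momentum_constraint_symmetrizable
    (n : ℕ)
    (G : Matrix (Fin (n - 1)) (Fin (n - 1)) ℝ) (hG : G.PosDef)
    (v : Fin (n - 1) → ℝ)
    (κ τ : ℝ) (hκτ : κ * τ < 0)
    (N : ℝ) (s : Fin (n - 1) → ℝ)
    (B : Fin (n - 1) → Matrix (Fin (n - 1) ⊕ Unit) (Fin (n - 1) ⊕ Unit) ℝ)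
    (hB : ∀ a, B a = (-(s a)) • (1 : Matrix (Fin (n - 1) ⊕ Unit) (Fin (n - 1) ⊕ Unit) ℝ)
      + Matrix.of (fun i j =>
          match i, j with
          | Sum.inl i, Sum.inl j => if i = a then -2 * (N / τ) * v j else 0
          | Sum.inl i, Sum.inr _ => if i = a then κ * N / τ else 0
          | Sum.inr _, Sum.inl j => -N * G a j
          | Sum.inr _, Sum.inr _ => 0)) :
    ∃ H : Matrix (Fin (n - 1) ⊕ Unit) (Fin (n - 1) ⊕ Unit) ℝ,
      H.IsSymm ∧ H.PosDef ∧ ∀ a, (H * B a).IsSymm := by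
  have hκ : κ ≠ 0 := by rintro rfl; simp at hκτ
  have hτ : τ ≠ 0 := by rintro rfl; simp at hκτ
  have hα : 0 < -τ / κ := by
    rw [show -τ / κ = -(κ * τ) / κ ^ 2 by field_simp]
    exact div_pos (neg_pos.mpr hκτ) (by positivity)
  set h : Fin (n - 1) ⊕ Unit → ℝ := Sum.elim ((-2 / κ) • v) 1
  have hH := posDef_symmetrizer hG hα (h := h) one_ne_zero
  have hHs := isHermitian_iff_isSymm.mp hH.isHermitian
  refine ⟨_, hHs, hH, fun a => ?_⟩
  set u : Fin (n - 1) ⊕ Unit → ℝ := Sum.elim ((κ * N / τ) • Pi.single a 1) 0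
  set q : Fin (n - 1) ⊕ Unit → ℝ := Sum.elim (-N • G a) 0
  have hE : B a = (-(s a)) • 1 + (vecMulVec u h + vecMulVec (Sum.elim 0 1) q) := by
    rw [hB a]
    congr 1
    ext (i | ⟨⟩) (j | ⟨⟩) <;> simp [u, q, h, vecMulVec_apply, Pi.single_apply]
    field_simp
  have hu : symmetrizer G (-τ / κ) h *ᵥ u = q + (h ⬝ᵥ u) • h := by
    rw [symmetrizer_mulVec_single (isHermitian_iff_isSymm.mp hG.isHermitian),
      show -τ / κ * (κ * N / τ) = -N by field_simp]
  rw [hE]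
  exact hHs.mul_smul_one_add
    (isSymm_mul_vecMulVec_add_vecMulVec hu (symmetrizer_mulVec_inr _ _ rfl)) _
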